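/- arXiv:2212.05792 — 2 statements merged into one kernel-verified Lean document; each statement's English description precedes it below -/
import Mathlib

section
/- Let V and W be real vector spaces and let m, g : V × V → ℝ and s : W × W → ℝ be symmetric bilinear maps that are positive semidefinite (m(v,v) ≥ 0, g(v,v) ≥ 0, s(w,w) ≥ 0 for all v ∈ V, w ∈ W), and let a, b : V × W → ℝ be bilinear maps. Define A[(u,z),(v,w)] := m(u,v) + g(u,v) + a(v,z) + b(v,z) − s(z,w) + a(u,w) + b(u,w) and the seminorm N(u,z) := (m(u,u) + g(u,u) + s(z,z))^{1/2}. Then for every (u,z) ∈ V × W one has A[(u,z),(u,−z)] = N(u,z) · N(u,−z) with N(u,−z) = N(u,z), and consequently the inf-sup bound sup over (v,w) ∈ V × W with N(v,w) ≤ 1 of A[(u,z),(v,w)] ≥ N(u,z) holds. -/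
/-- Inf-sup condition for the stabilized bilinear form: with
`N(u,z) = (m(u,u) + g(u,u) + s(z,z))^{1/2}` one has
`A[(u,z),(u,-z)] = N(u,z) · N(u,-z)`, `N(u,-z) = N(u,z)`, and the sup of
`A[(u,z),(v,w)]` over `N(v,w) ≤ 1` is at least `N(u,z)`. -/
theorem stmt_1 {V W : Type*} [AddCommGroup V] [Module ℝ V]
    [AddCommGroup W] [Module ℝ W]
    (m g : V →ₗ[ℝ] V →ₗ[ℝ] ℝ) (a b : V →ₗ[ℝ] W →ₗ[ℝ] ℝ)
    (s : W →ₗ[ℝ] W →ₗ[ℝ] ℝ)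
    (hm_symm : ∀ u v : V, m u v = m v u)
    (hg_symm : ∀ u v : V, g u v = g v u)
    (hs_symm : ∀ z w : W, s z w = s w z)
    (hm_pos : ∀ v : V, 0 ≤ m v v)
    (hg_pos : ∀ v : V, 0 ≤ g v v)
    (hs_pos : ∀ w : W, 0 ≤ s w w)
    (A : V × W → V × W → ℝ)
    (hA : ∀ u z v w, A (u, z) (v, w) =
      m u v + g u v + a v z + b v z - s z w + a u w + b u w)
    (N : V × W → ℝ)
    (hN : ∀ u z, N (u, z) = Real.sqrt (m u u + g u u + s z z)) :
    ∀ (u : V) (z : W),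
      A (u, z) (u, -z) = N (u, z) * N (u, -z) ∧
      N (u, -z) = N (u, z) ∧
      ∃ (v : V) (w : W), N (v, w) ≤ 1 ∧ N (u, z) ≤ A (u, z) (v, w) := by
  intro u z
  set Q : ℝ := m u u + g u u + s z z with hQ
  have hQ0 : 0 ≤ Q := by
    have := hm_pos u; have := hg_pos u; have := hs_pos z; positivity
  have hNeq : N (u, -z) = N (u, z) := by
    rw [hN, hN]
    simp [map_neg, neg_neg]
  have hAeq : A (u, z) (u, -z) = Q := by
    rw [hA]
    simp [map_neg]
    ring
  have hNQ : N (u, z) = Real.sqrt Q := hN u z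
  refine ⟨?_, hNeq, ?_⟩
  · rw [hAeq, hNeq, hNQ, Real.mul_self_sqrt hQ0]
  · rcases eq_or_lt_of_le hQ0 with h0 | hpos
    · refine ⟨0, 0, ?_, ?_⟩
      · rw [hN]; simp
      · rw [hN, ← hQ, ← h0, Real.sqrt_zero, hA]; simp
    · have hsq : 0 < Real.sqrt Q := Real.sqrt_pos.mpr hpos
      set c : ℝ := (Real.sqrt Q)⁻¹ with hc
      have hc0 : 0 < c := inv_pos.mpr hsq
      refine ⟨c • u, c • (-z), ?_, ?_⟩
      · rw [hN]
        have : m (c • u) (c • u) + g (c • u) (c • u) + s (c • (-z)) (c • (-z))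
            = c ^ 2 * Q := by
          simp [map_smul, map_neg, smul_eq_mul, hQ]; ring
        rw [this, Real.sqrt_mul (sq_nonneg c) Q, Real.sqrt_sq hc0.le]
        rw [hc, inv_mul_cancel₀ hsq.ne']
      · rw [hA, hN]
        have hA2 : m u (c • u) + g u (c • u) + a (c • u) z + b (c • u) z -
            s z (c • (-z)) + a u (c • (-z)) + b u (c • (-z)) = c * Q := by
          simp [map_smul, map_neg, smul_eq_mul, hQ]; ring
        rw [hA2, hc]
        rw [inv_mul_eq_div, le_div_iff₀ hsq, ← hQ, Real.mul_self_sqrt hQ0]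
end

section
/- Let k, λ, μ₊, μ₋ be real numbers and let η ≠ 0, μ₊ ≠ 0. Define the coefficients b₁ := 0, c₁ := (kπ/(2η))·(μ₊ − μ₋)/μ₊, a₁ := 1 − c₁η², b₂ := 1, c₂ := −1/(2η), a₂ := 1 − b₂η − c₂η², and the functions u₁⁺(x,y) := (a₁ + b₁y + c₁y²)·sin(kπx), u₂⁺(x,y) := (a₂ + b₂y + c₂y²)·cos(kπx), u₁⁻(x,y) := sin(kπx)·cos(kπ(y−η)), u₂⁻(x,y) := cos(kπx)·cos(kπ(y−η)). Then all three interface conditions hold on the plane {y = η}: for every x ∈ ℝ, (i) u₁⁺(x,η) = u₁⁻(x,η) and u₂⁺(x,η) = u₂⁻(x,η); (ii) μ₊·(∂_y u₁⁺(x,η) + ∂_x u₂⁺(x,η)) = μ₋·(∂_y u₁⁻(x,η) + ∂_x u₂⁻(x,η)); (iii) 2μ₊·∂_y u₂⁺(x,η) + λ·(∂_x u₁⁺(x,η) + ∂_y u₂⁺(x,η)) = 2μ₋·∂_y u₂⁻(x,η) + λ·(∂_x u₁⁻(x,η) + ∂_y u₂⁻(x,η)). -/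
/-!
On the interface both ansätze reduce to `(sin (kπx), cos (kπx))`, since the quadratics equal `1`
at `y = η` and `cos (kπ(y - η))` equals `1` there; this gives continuity, and also makes the
tangential derivatives agree on both sides. The lower solution has vanishing normal derivative
on `y = η`, so the traction conditions reduce to two design equations on the upper normal
derivatives `b + 2cη`: the one for `u₂⁺` must vanish, which fixes `c₂ = -1/(2η)`, and the one for
`u₁⁺` must balance the jump `μ₊ - μ₋` against the tangential derivative `-kπ sin (kπx)`, which
fixes `c₁`.
-/

open Real

lemma deriv_sin_const_mul (ω x : ℝ) :
    deriv (fun t => sin (ω * t)) x = ω * cos (ω * x) := by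
  simp (disch := fun_prop); ring

lemma deriv_cos_const_mul (ω x : ℝ) :
    deriv (fun t => cos (ω * t)) x = -(ω * sin (ω * x)) := by
  simp (disch := fun_prop); ring

lemma deriv_mul_cos_mul_sub_self (s ω η : ℝ) :
    deriv (fun t => s * cos (ω * (t - η))) η = 0 := by
  simp (disch := fun_prop)

lemma deriv_quadratic_mul (a b c s y : ℝ) :
    deriv (fun t => (a + b * t + c * t ^ 2) * s) y = (b + 2 * c * y) * s := by
  rw [deriv_mul_const (by fun_prop)]
  congr 1
  simp (disch := fun_prop); ring

/-- The explicit choice of coefficients from the paper makes the piecewise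
ansatz satisfy all three interface conditions on the plane `y = η`:
(i) continuity of the displacement, (ii) the first and (iii) the second
component of the traction condition `[σ(u)·n]_Γ = 0`. -/
theorem stmt_9 (k lam η μp μm a₁ b₁ c₁ a₂ b₂ c₂ : ℝ)
    (hη : η ≠ 0) (hμp : μp ≠ 0)
    (hb₁ : b₁ = 0)
    (hc₁ : c₁ = (k * π / (2 * η)) * ((μp - μm) / μp))
    (ha₁ : a₁ = 1 - c₁ * η ^ 2)
    (hb₂ : b₂ = 1)
    (hc₂ : c₂ = -(1 / (2 * η)))
    (ha₂ : a₂ = 1 - b₂ * η - c₂ * η ^ 2)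
    (u₁p u₂p u₁m u₂m : ℝ → ℝ → ℝ)
    (hu₁p : ∀ x y, u₁p x y = (a₁ + b₁ * y + c₁ * y ^ 2) * Real.sin (k * π * x))
    (hu₂p : ∀ x y, u₂p x y = (a₂ + b₂ * y + c₂ * y ^ 2) * Real.cos (k * π * x))
    (hu₁m : ∀ x y, u₁m x y = Real.sin (k * π * x) * Real.cos (k * π * (y - η)))
    (hu₂m : ∀ x y, u₂m x y = Real.cos (k * π * x) * Real.cos (k * π * (y - η))) :
    ∀ x : ℝ,
      (u₁p x η = u₁m x η ∧ u₂p x η = u₂m x η) ∧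
      μp * (deriv (fun y => u₁p x y) η + deriv (fun x' => u₂p x' η) x) =
        μm * (deriv (fun y => u₁m x y) η + deriv (fun x' => u₂m x' η) x) ∧
      2 * μp * deriv (fun y => u₂p x y) η +
          lam * (deriv (fun x' => u₁p x' η) x + deriv (fun y => u₂p x y) η) =
        2 * μm * deriv (fun y => u₂m x y) η +
          lam * (deriv (fun x' => u₁m x' η) x + deriv (fun y => u₂m x y) η) := by
  intro x
  have hp₁ : a₁ + b₁ * η + c₁ * η ^ 2 = 1 := by rw [ha₁, hb₁]; ring
  have hp₂ : a₂ + b₂ * η + c₂ * η ^ 2 = 1 := by rw [ha₂]; ring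
  have hshear : μp * (b₁ + 2 * c₁ * η) = k * π * (μp - μm) := by
    rw [hb₁, hc₁]; field_simp; ring
  have hnormal : b₂ + 2 * c₂ * η = 0 := by
    rw [hb₂, hc₂]; field_simp; ring
  simp only [hu₁p, hu₂p, hu₁m, hu₂m, hp₁, hp₂, sub_self, mul_zero, cos_zero, mul_one, one_mul,
    deriv_quadratic_mul, deriv_sin_const_mul, deriv_cos_const_mul, deriv_mul_cos_mul_sub_self]
  refine ⟨⟨trivial, trivial⟩, ?_, ?_⟩
  · linear_combination sin (k * π * x) * hshear
  · linear_combination (2 * μp + lam) * cos (k * π * x) * hnormal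
end
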